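/- arXiv:1902.05743 — 5 statements merged into one kernel-verified Lean document; each statement's English description precedes it below -/
import Mathlib

section
/- Let (Ω, 𝒜, ℙ) be a probability space and let b : ℝ^d × Ω → ℝ be a bounded map such that for every y ∈ ℝ^d the function b(y, ·) is 𝒜-measurable. Let 𝒩 be a countable dense subset of ℝ^d and let ℱ ⊆ 𝒜 be the σ-algebra generated by the family of functions {b(y, ·) : y ∈ 𝒩}. Assume that b is stochastically continuous: for every x ∈ ℝ^d and every ε > 0, ℙ(|b(y, ·) − b(x, ·)| ≥ ε) → 0 as y → x. Then for every x ∈ ℝ^d the function b(x, ·) coincides ℙ-almost everywhere with an ℱ-measurable function (equivalently, b(x, ·) is measurable with respect to the ℙ-completion of ℱ). -/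
open MeasureTheory Filter Topology
open scoped ENNReal

/-- A bounded, stochastically continuous random field `b` is, at every
point `x`, almost-everywhere equal to a function measurable with respect to the
σ-algebra generated by the values of `b` at points of a countable dense set. -/
theorem stmt0 {d : ℕ} {Ω : Type*} [MeasurableSpace Ω]
    (P : Measure Ω) [IsProbabilityMeasure P]
    (b : EuclideanSpace ℝ (Fin d) → Ω → ℝ)
    (hmeas : ∀ y, Measurable (b y))
    (hbdd : ∃ C : ℝ, ∀ y ω, |b y ω| ≤ C)
    (N : Set (EuclideanSpace ℝ (Fin d))) (hNc : N.Countable) (hNd : Dense N)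
    (F : MeasurableSpace Ω)
    (hF : F = ⨆ y ∈ N, MeasurableSpace.comap (b y) inferInstance)
    (hcont : ∀ x : EuclideanSpace ℝ (Fin d), ∀ ε > (0:ℝ),
      Tendsto (fun y => P {ω | ε ≤ |b y ω - b x ω|}) (𝓝 x) (𝓝 0)) :
    ∀ x : EuclideanSpace ℝ (Fin d),
      ∃ g : Ω → ℝ, Measurable[F] g ∧ b x =ᵐ[P] g := by
  intro x
  -- choose a sequence Y n ∈ N with small exceptional probability
  have hex : ∀ n : ℕ, ∃ y, y ∈ N ∧
      P {ω | (1/2 : ℝ)^n ≤ |b y ω - b x ω|} ≤ ENNReal.ofReal ((1/2 : ℝ)^n) := by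
    intro n
    have hε : (0:ℝ) < (1/2 : ℝ)^n := by positivity
    have hε' : (0 : ℝ≥0∞) < ENNReal.ofReal ((1/2 : ℝ)^n) := ENNReal.ofReal_pos.2 hε
    have hev : ∀ᶠ y in 𝓝 x,
        P {ω | (1/2 : ℝ)^n ≤ |b y ω - b x ω|} ≤ ENNReal.ofReal ((1/2 : ℝ)^n) :=
      (hcont x _ hε).eventually (eventually_le_nhds hε')
    obtain ⟨y, hy1, hy2⟩ := mem_closure_iff_nhds.1 (hNd x) _ hev
    exact ⟨y, hy2, hy1⟩
  choose Y hYN hYP using hex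
  -- each b (Y n) is F-measurable
  have hYF : ∀ n, Measurable[F] (b (Y n)) := by
    intro n
    rw [measurable_iff_comap_le, hF]
    exact le_iSup₂ (f := fun y (_ : y ∈ N) => MeasurableSpace.comap (b y) inferInstance)
      (Y n) (hYN n)
  -- Borel–Cantelli: a.e. ω, b (Y n) ω → b x ω
  have hsum : (∑' n : ℕ, P {ω | (1/2 : ℝ)^n ≤ |b (Y n) ω - b x ω|}) ≠ ⊤ := by
    refine ne_top_of_le_ne_top (b := ∑' n : ℕ, ENNReal.ofReal ((1/2 : ℝ)^n)) ?_
      (ENNReal.tsum_le_tsum fun n => hYP n)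
    have : ∀ n : ℕ, ENNReal.ofReal ((1/2 : ℝ)^n) = (1/2 : ℝ≥0∞)^n := by
      intro n
      rw [ENNReal.ofReal_pow (by norm_num : (0:ℝ) ≤ 1/2)]
      norm_num [ENNReal.ofReal_div_of_pos]
    simp_rw [this]
    simp [ENNReal.tsum_geometric, ENNReal.sub_half]
  have hae : ∀ᵐ ω ∂P, Tendsto (fun n => b (Y n) ω) atTop (𝓝 (b x ω)) := by
    filter_upwards [ae_eventually_notMem hsum] with ω hω
    rw [tendsto_iff_norm_sub_tendsto_zero]
    have h1 : Tendsto (fun n : ℕ => (1/2 : ℝ)^n) atTop (𝓝 0) := by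
      apply tendsto_pow_atTop_nhds_zero_of_lt_one <;> norm_num
    refine squeeze_zero' (Eventually.of_forall fun n => norm_nonneg _) ?_ h1
    filter_upwards [hω] with n hn
    simpa [Real.norm_eq_abs] using le_of_not_ge hn
  -- define the F-measurable limit
  set s : Set Ω := {ω | ∃ c, Tendsto (fun n => b (Y n) ω) atTop (𝓝 c)} with hs
  have hsm : MeasurableSet[F] s := measurableSet_exists_tendsto hYF
  classical
  set f : ℕ → Ω → ℝ := fun n => s.piecewise (b (Y n)) 0 with hfdef
  have hfm : ∀ n, Measurable[F] (f n) :=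
    fun n => Measurable.piecewise hsm (hYF n) measurable_zero
  have hfc : ∀ ω, ∃ c, Tendsto (fun n => f n ω) atTop (𝓝 c) := by
    intro ω
    by_cases hω : ω ∈ s
    · exact ⟨hω.choose, by simpa [hfdef, Set.indicator_of_mem hω] using hω.choose_spec⟩
    · exact ⟨0, by simp [hfdef, Set.indicator_of_notMem hω, tendsto_const_nhds]⟩
  set g : Ω → ℝ := fun ω => limUnder atTop (fun n => f n ω) with hgdef
  have hgt : ∀ ω, Tendsto (fun n => f n ω) atTop (𝓝 (g ω)) :=
    fun ω => tendsto_nhds_limUnder (hfc ω)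
  have hgm : Measurable[F] g :=
    measurable_of_tendsto_metrizable' atTop hfm (tendsto_pi_nhds.2 hgt)
  refine ⟨g, hgm, ?_⟩
  filter_upwards [hae] with ω hω
  have hωs : ω ∈ s := ⟨b x ω, hω⟩
  have : Tendsto (fun n => f n ω) atTop (𝓝 (b x ω)) := by
    simpa [hfdef, Set.indicator_of_mem hωs] using hω
  exact tendsto_nhds_unique this (hgt ω)
end

section
/- Let Ω be a compact metric space with Borel probability measure μ and T : ℝ^d × Ω → Ω jointly measurable, and let ω̃ ∈ Ω be a typical trajectory. Then for every continuous g : Ω → ℝ and every continuous compactly supported φ : ℝ^d → ℝ, lim_{ε → 0⁺} ∫_{ℝ^d} φ(x) g(T_{x/ε} ω̃) dx = (∫_{ℝ^d} φ(x) dx) · (∫_Ω g(ω) dμ(ω)). -/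
open MeasureTheory Filter Topology Pointwise

/-- If the mean-value limit holds for arbitrarily good `L¹` approximations of `f`
(with a uniform bound on the oscillating factor), then it holds for `f`. -/
lemma stmt8_approx {α : Type*} [MeasurableSpace α] {ν : Measure α}
    {l : Filter ℝ} {F : ℝ → α → ℝ} {M I : ℝ} (hM : 0 ≤ M)
    (hFm : ∀ ε, AEStronglyMeasurable (F ε) ν)
    (hFb : ∀ ε x, ‖F ε x‖ ≤ M)
    {f : α → ℝ} (hf : Integrable f ν)
    (key : ∀ δ : ℝ, 0 < δ → ∃ f' : α → ℝ, Integrable f' ν ∧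
      (∫ x, ‖f x - f' x‖ ∂ν) ≤ δ ∧
      Tendsto (fun ε => ∫ x, f' x * F ε x ∂ν) l (𝓝 ((∫ x, f' x ∂ν) * I))) :
    Tendsto (fun ε => ∫ x, f x * F ε x ∂ν) l (𝓝 ((∫ x, f x ∂ν) * I)) := by
  have hint : ∀ (p : α → ℝ), Integrable p ν → ∀ ε, Integrable (fun x => p x * F ε x) ν := by
    intro p hp ε
    have h := hp.bdd_mul (c := M) (hFm ε) (Filter.Eventually.of_forall (hFb ε))
    simpa [mul_comm] using h
  rw [Metric.tendsto_nhds]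
  intro η hη
  set δ : ℝ := η / (2 * (M + |I| + 1)) with hδdef
  have hden : 0 < 2 * (M + |I| + 1) := by positivity
  have hδ : 0 < δ := div_pos hη hden
  obtain ⟨f', hf', hfd, htend⟩ := key δ hδ
  have h1 : ∀ ε, dist (∫ x, f x * F ε x ∂ν) (∫ x, f' x * F ε x ∂ν) ≤ δ * M := by
    intro ε
    rw [dist_eq_norm, ← integral_sub (hint f hf ε) (hint f' hf' ε)]
    calc ‖∫ x, (f x * F ε x - f' x * F ε x) ∂ν‖
        ≤ ∫ x, ‖f x * F ε x - f' x * F ε x‖ ∂ν := norm_integral_le_integral_norm _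
      _ ≤ ∫ x, ‖f x - f' x‖ * M ∂ν := by
          refine integral_mono ((hint f hf ε).sub (hint f' hf' ε)).norm
            ((hf.sub hf').norm.mul_const M) (fun x => ?_)
          have : f x * F ε x - f' x * F ε x = (f x - f' x) * F ε x := by ring
          rw [this, norm_mul]
          exact mul_le_mul_of_nonneg_left (hFb ε x) (norm_nonneg _)
      _ = (∫ x, ‖f x - f' x‖ ∂ν) * M := integral_mul_const _ _
      _ ≤ δ * M := mul_le_mul_of_nonneg_right hfd hM
  have h2 : dist ((∫ x, f' x ∂ν) * I) ((∫ x, f x ∂ν) * I) ≤ δ * |I| := by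
    rw [dist_eq_norm, ← sub_mul, Real.norm_eq_abs, abs_mul]
    refine mul_le_mul (le_trans ?_ hfd) le_rfl (abs_nonneg _) hδ.le
    rw [← Real.norm_eq_abs, ← integral_sub hf' hf]
    refine le_trans (norm_integral_le_integral_norm _) (le_of_eq ?_)
    congr 1; funext x; rw [norm_sub_rev]
  have hsmall : δ * M + δ * |I| < η / 2 := by
    have h : δ * M + δ * |I| = δ * (M + |I|) := by ring
    rw [h, hδdef, div_mul_eq_mul_div, div_lt_iff₀ hden]
    nlinarith [abs_nonneg I, hη]
  filter_upwards [Metric.tendsto_nhds.mp htend (η / 2) (by linarith)] with ε hε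
  calc dist (∫ x, f x * F ε x ∂ν) ((∫ x, f x ∂ν) * I)
      ≤ dist (∫ x, f x * F ε x ∂ν) (∫ x, f' x * F ε x ∂ν)
        + dist (∫ x, f' x * F ε x ∂ν) ((∫ x, f' x ∂ν) * I)
        + dist ((∫ x, f' x ∂ν) * I) ((∫ x, f x ∂ν) * I) := dist_triangle4 _ _ _ _
    _ < δ * M + η / 2 + δ * |I| := by have := h1 ε; linarith [hε]
    _ ≤ η := by linarith

set_option synthInstance.maxHeartbeats 1000000 in
/-- mean-value property: if `ω̃` is a typical trajectory, then for every
continuous `g : Ω → ℝ` and continuous compactly supported `φ : ℝ^d → ℝ`,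
`∫ φ(x) g(T_{x/ε} ω̃) dx → (∫ φ)(∫ g dμ)` as `ε → 0⁺`. -/
theorem stmt8 {d : ℕ} {Ω : Type*} [MetricSpace Ω] [CompactSpace Ω]
    [MeasurableSpace Ω] [BorelSpace Ω]
    (μ : Measure Ω) [IsProbabilityMeasure μ]
    (T : EuclideanSpace ℝ (Fin d) → Ω → Ω)
    (hTmeas : Measurable (Function.uncurry T))
    (ωt : Ω)
    (htyp : ∀ g : Ω → ℝ, Continuous g →
      ∀ A : Set (EuclideanSpace ℝ (Fin d)),
        MeasurableSet A → Bornology.IsBounded A → 0 < volume A →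
        Tendsto (fun t : ℝ =>
            (1 / (t ^ d * (volume A).toReal)) * ∫ x in t • A, g (T x ωt))
          atTop (𝓝 (∫ ω', g ω' ∂μ)))
    (g : Ω → ℝ) (hg : Continuous g)
    (φ : EuclideanSpace ℝ (Fin d) → ℝ) (hφ : Continuous φ)
    (hφc : HasCompactSupport φ) :
    Tendsto (fun ε : ℝ => ∫ x, φ x * g (T (ε⁻¹ • x) ωt))
      (𝓝[>] 0) (𝓝 ((∫ x, φ x) * ∫ ω', g ω' ∂μ)) := by
  set I : ℝ := ∫ ω', g ω' ∂μ with hI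
  have : Nonempty Ω := ⟨ωt⟩
  obtain ⟨ω₀, -, hω₀⟩ := isCompact_univ.exists_isMaxOn Set.univ_nonempty
    hg.norm.continuousOn
  set M : ℝ := ‖g ω₀‖ with hMdef
  have hM : ∀ ω, ‖g ω‖ ≤ M := fun ω => hω₀ (Set.mem_univ ω)
  have hM0 : 0 ≤ M := norm_nonneg _
  set F : ℝ → EuclideanSpace ℝ (Fin d) → ℝ := fun ε x => g (T (ε⁻¹ • x) ωt) with hF
  have hFm : ∀ ε, Measurable (F ε) := by
    intro ε
    have h : Measurable fun x : EuclideanSpace ℝ (Fin d) => (ε⁻¹ • x, ωt) :=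
      (measurable_id.const_smul ε⁻¹).prodMk measurable_const
    exact hg.measurable.comp (hTmeas.comp h)
  have hFb : ∀ ε x, ‖F ε x‖ ≤ M := fun ε x => hM _
  -- Step A: set integrals over bounded measurable sets
  have stepA : ∀ A : Set (EuclideanSpace ℝ (Fin d)), MeasurableSet A →
      Bornology.IsBounded A →
      Tendsto (fun ε => ∫ x in A, F ε x) (𝓝[>] (0:ℝ))
        (𝓝 ((volume A).toReal * I)) := by
    intro A hAm hAb
    rcases eq_or_lt_of_le (zero_le : 0 ≤ volume A) with h0 | hpos
    · have hA0 : volume A = 0 := h0.symm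
      have hz : ∀ ε : ℝ, ∫ x in A, F ε x = 0 := fun ε => by
        rw [Measure.restrict_eq_zero.mpr hA0, integral_zero_measure]
      simp only [hz, hA0, ENNReal.toReal_zero, zero_mul]
      exact tendsto_const_nhds
    · have hfin : volume A ≠ ⊤ := hAb.measure_lt_top.ne
      have hvr : 0 < (volume A).toReal := ENNReal.toReal_pos hpos.ne' hfin
      have h1 := (htyp g hg A hAm hAb hpos).comp tendsto_inv_nhdsGT_zero
      have h2 := h1.const_mul ((volume A).toReal)
      refine Tendsto.congr' ?_ h2
      filter_upwards [self_mem_nhdsWithin] with ε (hε : ε ∈ Set.Ioi (0:ℝ))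
      have hε0 : (0:ℝ) < ε := hε
      have hii : (0:ℝ) < ε⁻¹ := inv_pos.mpr hε0
      have hco := Measure.setIntegral_comp_smul_of_pos volume
        (fun y => g (T y ωt)) A hii
      rw [finrank_euclideanSpace_fin] at hco
      have hp : (ε⁻¹ : ℝ) ^ d ≠ 0 := pow_ne_zero _ hii.ne'
      show (volume A).toReal * ((1 / (ε⁻¹ ^ d * (volume A).toReal)) *
          ∫ x in ε⁻¹ • A, g (T x ωt)) = ∫ x in A, F ε x
      rw [show (∫ x in A, F ε x) = ∫ x in A, g (T (ε⁻¹ • x) ωt) from rfl, hco,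
        smul_eq_mul]
      field_simp
  -- integrability of products
  have hint : ∀ (p : EuclideanSpace ℝ (Fin d) → ℝ), Integrable p →
      ∀ ε, Integrable (fun x => p x * F ε x) := by
    intro p hp ε
    have h := hp.bdd_mul (c := M) (hFm ε).aestronglyMeasurable
      (Filter.Eventually.of_forall (hFb ε))
    simpa [mul_comm] using h
  set P : (EuclideanSpace ℝ (Fin d) → ℝ) → Prop := fun f =>
    Tendsto (fun ε => ∫ x, f x * F ε x) (𝓝[>] (0:ℝ)) (𝓝 ((∫ x, f x) * I)) with hP
  -- indicator of a finite-measure set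
  have stepInd1 : ∀ s : Set (EuclideanSpace ℝ (Fin d)), MeasurableSet s →
      volume s < ⊤ → P (s.indicator 1) := by
    intro s hs hsfin
    have hsint : Integrable (s.indicator (1 : EuclideanSpace ℝ (Fin d) → ℝ)) :=
      (integrableOn_const hsfin.ne).integrable_indicator hs
    refine stmt8_approx hM0 (fun ε => (hFm ε).aestronglyMeasurable) hFb hsint ?_
    intro δ hδ
    have hanti : Antitone (fun n : ℕ => s \ Metric.closedBall 0 n) := fun n m h =>
      Set.diff_subset_diff_right (Metric.closedBall_subset_closedBall (by exact_mod_cast h))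
    have hiInter : (⋂ n : ℕ, s \ Metric.closedBall 0 n) = ∅ := by
      refine Set.eq_empty_iff_forall_notMem.mpr fun x hx => ?_
      simp only [Set.mem_iInter, Set.mem_diff, Metric.mem_closedBall] at hx
      obtain ⟨n, hn⟩ := exists_nat_ge (dist x 0)
      exact (hx n).2 hn
    have h0 := tendsto_measure_iInter_atTop
      (fun n => (hs.diff Metric.isClosed_closedBall.measurableSet).nullMeasurableSet)
      hanti ⟨0, (lt_of_le_of_lt (measure_mono Set.diff_subset) hsfin).ne⟩
    rw [hiInter, measure_empty] at h0
    have hev := h0.eventually_lt_const (ENNReal.ofReal_pos.mpr hδ)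
    obtain ⟨n, hn⟩ := hev.exists
    set A : Set (EuclideanSpace ℝ (Fin d)) := s ∩ Metric.closedBall 0 n with hA
    have hAm : MeasurableSet A := hs.inter Metric.isClosed_closedBall.measurableSet
    have hAb : Bornology.IsBounded A :=
      Metric.isBounded_closedBall.subset Set.inter_subset_right
    have hAfin : volume A < ⊤ := lt_of_le_of_lt (measure_mono Set.inter_subset_left) hsfin
    refine ⟨A.indicator 1, (integrableOn_const hAfin.ne).integrable_indicator hAm,
      ?_, ?_⟩
    · have hpt : ∀ x, ‖s.indicator (1 : EuclideanSpace ℝ (Fin d) → ℝ) x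
          - A.indicator 1 x‖ = (s \ Metric.closedBall 0 n).indicator 1 x := by
        intro x
        by_cases hxs : x ∈ s <;> by_cases hxb : x ∈ Metric.closedBall (0:EuclideanSpace ℝ (Fin d)) (n:ℝ) <;>
          simp [Set.indicator, hA, Set.mem_diff, hxs, hxb]
      simp_rw [hpt]
      rw [integral_indicator_one (hs.diff Metric.isClosed_closedBall.measurableSet)]
      exact ENNReal.toReal_le_of_le_ofReal hδ.le hn.le
    · have h := stepA A hAm hAb
      have he1 : ∀ ε, ∫ x, A.indicator 1 x * F ε x = ∫ x in A, F ε x := by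
        intro ε
        simp_rw [← Set.indicator_mul_left, Pi.one_apply, one_mul]
        exact integral_indicator hAm
      have he2 : (∫ x, A.indicator (1 : EuclideanSpace ℝ (Fin d) → ℝ) x)
          = (volume A).toReal := integral_indicator_one hAm
      refine Tendsto.congr (fun ε => (he1 ε).symm) ?_
      rw [he2]
      exact h
  -- scaling
  have hPsmul : ∀ (c : ℝ) (f : EuclideanSpace ℝ (Fin d) → ℝ), Integrable f → P f →
      P (fun x => c * f x) := by
    intro c f hf hPf
    have h2 : Tendsto (fun ε => ∫ x, (c * f x) * F ε x) (𝓝[>] (0:ℝ))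
        (𝓝 (c * ((∫ x, f x) * I))) := by
      simp only [mul_assoc, integral_const_mul]
      exact hPf.const_mul c
    have he : (∫ x, c * f x) * I = c * ((∫ x, f x) * I) := by
      rw [integral_const_mul]; ring
    show Tendsto (fun ε => ∫ x, (c * f x) * F ε x) (𝓝[>] (0:ℝ)) (𝓝 ((∫ x, c * f x) * I))
    rw [he]
    exact h2
  -- the induction
  have hφint : Integrable φ := hφ.integrable_of_hasCompactSupport hφc
  have main : P φ := by
    refine Integrable.induction (μ := volume) P ?_ ?_ ?_ ?_ hφint
    · intro c s hs hsfin
      have h1 := stepInd1 s hs hsfin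
      have hsint : Integrable (s.indicator (1 : EuclideanSpace ℝ (Fin d) → ℝ)) :=
        (integrableOn_const hsfin.ne).integrable_indicator hs
      have h2 := hPsmul c _ hsint h1
      have heq : (s.indicator fun _ => c) = fun x => c * s.indicator 1 x := by
        funext x; by_cases hx : x ∈ s <;> simp [hx]
      rw [heq]
      exact h2
    · intro f f' hdisj hf hf' hPf hPf'
      have hsum := hPf.add hPf'
      show Tendsto (fun ε => ∫ x, (f + f') x * F ε x) (𝓝[>] (0:ℝ))
        (𝓝 ((∫ x, (f + f') x) * I))
      have he : ∀ ε, ∫ x, (f + f') x * F ε x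
          = (∫ x, f x * F ε x) + ∫ x, f' x * F ε x := by
        intro ε
        simp_rw [Pi.add_apply, add_mul]
        exact integral_add (hint f hf ε) (hint f' hf' ε)
      have he2 : (∫ x, (f + f') x) = (∫ x, f x) + ∫ x, f' x := by
        simp_rw [Pi.add_apply]
        exact integral_add hf hf'
      refine Tendsto.congr (fun ε => (he ε).symm) ?_
      rw [he2, add_mul]
      exact hsum
    · refine IsSeqClosed.isClosed ?_
      intro f_n f hmem hlim
      simp only [Set.mem_setOf_eq] at hmem ⊢
      refine stmt8_approx hM0 (fun ε => (hFm ε).aestronglyMeasurable) hFb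
        (L1.integrable_coeFn f) ?_
      intro δ hδ
      obtain ⟨N, hN⟩ := Metric.tendsto_atTop.mp hlim δ hδ
      refine ⟨⇑(f_n N), L1.integrable_coeFn _, ?_, hmem N⟩
      have hd := L1.dist_eq_integral_dist f (f_n N)
      simp_rw [dist_eq_norm] at hd
      rw [← hd, ← dist_eq_norm, dist_comm]
      exact (hN N le_rfl).le
    · intro f f' hae hf hPf
      have h1 : ∀ ε, ∫ x, f' x * F ε x = ∫ x, f x * F ε x := fun ε =>
        integral_congr_ae (hae.symm.mul EventuallyEq.rfl)
      have h2 : (∫ x, f' x) = ∫ x, f x := integral_congr_ae hae.symm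
      show Tendsto (fun ε => ∫ x, f' x * F ε x) (𝓝[>] (0:ℝ)) (𝓝 ((∫ x, f' x) * I))
      refine Tendsto.congr (fun ε => (h1 ε).symm) ?_
      rw [h2]
      exact hPf
  exact main
end

section
/- Let Ω be a compact metric space with Borel probability measure μ, T : ℝ^d × Ω → Ω jointly measurable, ω̃ ∈ Ω a typical trajectory, and D ⊆ ℝ^d a bounded open set. Let (ε_k) be a sequence of positive reals with ε_k → 0 and suppose v^k → v̄ strongly in L²(D). Then (v^k) strongly two-scale converges to v⁰(x, ω) := v̄(x): for every φ ∈ C_c^∞(D) and every continuous b : Ω → ℝ, ∫_D v^k(x) φ(x) b(T_{x/ε_k} ω̃) dx → (∫_D v̄(x) φ(x) dx) · (∫_Ω b(ω) dμ(ω)) as k → ∞, and ‖v^k‖_{L²(D)} → ‖v⁰‖_{L²(D × Ω)}. -/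
open MeasureTheory Filter Topology Pointwise

open scoped ENNReal NNReal
open Bornology

private lemma auxA {d : ℕ} {Ω : Type*} (T : EuclideanSpace ℝ (Fin d) → Ω → Ω) (ωt : Ω)
    (b : Ω → ℝ) (I : ℝ)
    (htypb : ∀ A : Set (EuclideanSpace ℝ (Fin d)),
      MeasurableSet A → IsBounded A → 0 < volume A →
      Tendsto (fun t : ℝ => (1 / (t ^ d * (volume A).toReal)) * ∫ x in t • A, b (T x ωt))
        atTop (𝓝 I))
    (εk : ℕ → ℝ) (hεpos : ∀ k, 0 < εk k)
    (htk : Tendsto (fun k => (εk k)⁻¹) atTop atTop)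
    (A : Set (EuclideanSpace ℝ (Fin d))) (hA : MeasurableSet A) (hAb : IsBounded A) :
    Tendsto (fun k => ∫ x in A, b (T ((εk k)⁻¹ • x) ωt)) atTop
      (𝓝 ((volume A).toReal * I)) := by
  by_cases h0 : volume A = 0
  · have hz : ∀ k : ℕ, ∫ x in A, b (T ((εk k)⁻¹ • x) ωt) = 0 :=
      fun k => setIntegral_measure_zero _ h0
    rw [h0]
    simp only [ENNReal.toReal_zero, zero_mul]
    exact tendsto_const_nhds.congr fun k => (hz k).symm
  · have hpos : 0 < volume A := zero_lt_iff.mpr h0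
    have hfin : volume A ≠ ⊤ := hAb.measure_lt_top.ne
    have hAr : 0 < (volume A).toReal := ENNReal.toReal_pos h0 hfin
    have h1 := (htypb A hA hAb hpos).comp htk
    have h2 := h1.const_mul ((volume A).toReal)
    refine h2.congr fun k => ?_
    have ht : (0:ℝ) < (εk k)⁻¹ := inv_pos.mpr (hεpos k)
    have hcv := Measure.setIntegral_comp_smul volume (fun y => b (T y ωt)) (R := (εk k)⁻¹) A ht.ne'
    show (volume A).toReal *
        ((1 / ((εk k)⁻¹ ^ d * (volume A).toReal)) * ∫ x in (εk k)⁻¹ • A, b (T x ωt)) =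
      ∫ x in A, b (T ((εk k)⁻¹ • x) ωt)
    rw [hcv, finrank_euclideanSpace_fin, abs_of_pos (by positivity), smul_eq_mul]
    have hpw : ((εk k)⁻¹ : ℝ) ^ d ≠ 0 := by positivity
    field_simp

private lemma auxMain {d : ℕ} {Ω : Type*} (T : EuclideanSpace ℝ (Fin d) → Ω → Ω) (ωt : Ω)
    (b : Ω → ℝ) (I M : ℝ)
    (hgkmeas : ∀ t : ℝ, Measurable fun x : EuclideanSpace ℝ (Fin d) => b (T (t • x) ωt))
    (hM : ∀ ω', ‖b ω'‖ ≤ M)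
    (htypb : ∀ A : Set (EuclideanSpace ℝ (Fin d)),
      MeasurableSet A → IsBounded A → 0 < volume A →
      Tendsto (fun t : ℝ => (1 / (t ^ d * (volume A).toReal)) * ∫ x in t • A, b (T x ωt))
        atTop (𝓝 I))
    (εk : ℕ → ℝ) (hεpos : ∀ k, 0 < εk k)
    (htk : Tendsto (fun k => (εk k)⁻¹) atTop atTop)
    (D : Set (EuclideanSpace ℝ (Fin d))) (hD : MeasurableSet D) (hDb : IsBounded D)
    {f : EuclideanSpace ℝ (Fin d) → ℝ} (hf : Integrable f (volume.restrict D)) :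
    Tendsto (fun k => ∫ x in D, f x * b (T ((εk k)⁻¹ • x) ωt)) atTop
      (𝓝 ((∫ x in D, f x) * I)) := by
  have hM0 : 0 ≤ M := (norm_nonneg _).trans (hM ωt)
  have hgk : ∀ k : ℕ,
      AEStronglyMeasurable (fun x => b (T ((εk k)⁻¹ • x) ωt)) (volume.restrict D) :=
    fun k => (hgkmeas _).aestronglyMeasurable
  have hmul : ∀ h : EuclideanSpace ℝ (Fin d) → ℝ, Integrable h (volume.restrict D) →
      ∀ k : ℕ, Integrable (fun x => h x * b (T ((εk k)⁻¹ • x) ωt)) (volume.restrict D) := by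
    intro h hh k
    exact (hh.bdd_mul (hgk k) (Filter.Eventually.of_forall fun x => hM _)).congr
      (Filter.Eventually.of_forall fun x => mul_comm _ _)
  refine Integrable.induction
    (P := fun f => Tendsto (fun k => ∫ x in D, f x * b (T ((εk k)⁻¹ • x) ωt)) atTop
      (𝓝 ((∫ x in D, f x) * I))) ?_ ?_ ?_ ?_ hf
  · intro c s hs _
    have hA : MeasurableSet (D ∩ s) := hD.inter hs
    have hAb : IsBounded (D ∩ s) := hDb.subset Set.inter_subset_left
    have base := (auxA T ωt b I htypb εk hεpos htk _ hA hAb).const_mul c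
    have e2 : (∫ x in D, s.indicator (fun _ => c) x) * I
        = c * ((volume (D ∩ s)).toReal * I) := by
      rw [setIntegral_indicator hs, setIntegral_const, smul_eq_mul, Measure.real]; ring
    rw [e2]
    refine base.congr fun k => ?_
    rw [← integral_const_mul, ← setIntegral_indicator hs]
    refine integral_congr_ae (Filter.Eventually.of_forall fun x => ?_)
    by_cases hx : x ∈ s <;> simp [hx]
  · intro f g _ hfi hgi hPf hPg
    have hval : (∫ x in D, (f + g) x) * I
        = (∫ x in D, f x) * I + (∫ x in D, g x) * I := by
      simp only [Pi.add_apply]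
      rw [integral_add hfi hgi, add_mul]
    rw [hval]
    refine (hPf.add hPg).congr fun k => ?_
    rw [← integral_add (hmul f hfi k) (hmul g hgi k)]
    exact integral_congr_ae (Filter.Eventually.of_forall fun x => by simp [add_mul])
  · have key : ∀ (h : (EuclideanSpace ℝ (Fin d)) →₁[volume.restrict D] ℝ) (k : ℕ),
        |(∫ x in D, h x * b (T ((εk k)⁻¹ • x) ωt)) - (∫ x in D, h x) * I|
          ≤ (M + |I|) * ‖h‖ := by
      intro h k
      have hint : Integrable h (volume.restrict D) := L1.integrable_coeFn h
      have hbd : ∫ x in D, ‖h x‖ = ‖h‖ := (L1.norm_eq_integral_norm h).symm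
      have h1 : |∫ x in D, h x * b (T ((εk k)⁻¹ • x) ωt)| ≤ M * ‖h‖ := by
        rw [← Real.norm_eq_abs]
        calc ‖∫ x in D, h x * b (T ((εk k)⁻¹ • x) ωt)‖
            ≤ ∫ x in D, ‖h x * b (T ((εk k)⁻¹ • x) ωt)‖ :=
              norm_integral_le_integral_norm _
          _ ≤ ∫ x in D, M * ‖h x‖ := by
              refine integral_mono (hmul _ hint k).norm (hint.norm.const_mul M) fun x => ?_
              rw [norm_mul]
              calc ‖h x‖ * ‖b (T ((εk k)⁻¹ • x) ωt)‖ ≤ ‖h x‖ * M := by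
                    exact mul_le_mul_of_nonneg_left (hM _) (norm_nonneg _)
                _ = M * ‖h x‖ := mul_comm _ _
          _ = M * ‖h‖ := by rw [integral_const_mul, hbd]
      have h2 : |(∫ x in D, h x) * I| ≤ ‖h‖ * |I| := by
        rw [abs_mul]
        refine mul_le_mul_of_nonneg_right ?_ (abs_nonneg I)
        rw [← Real.norm_eq_abs]
        calc ‖∫ x in D, h x‖ ≤ ∫ x in D, ‖h x‖ := norm_integral_le_integral_norm _
          _ = ‖h‖ := hbd
      calc |(∫ x in D, h x * b (T ((εk k)⁻¹ • x) ωt)) - (∫ x in D, h x) * I|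
          ≤ |∫ x in D, h x * b (T ((εk k)⁻¹ • x) ωt)| + |(∫ x in D, h x) * I| :=
            abs_sub _ _
        _ ≤ M * ‖h‖ + ‖h‖ * |I| := add_le_add h1 h2
        _ = (M + |I|) * ‖h‖ := by ring
    refine isClosed_of_closure_subset fun f hfc => ?_
    simp only [Set.mem_setOf_eq] at *
    rw [Metric.tendsto_atTop]
    intro ε hε
    have hMI : (0:ℝ) < M + |I| + 1 := by positivity
    obtain ⟨g, hgS, hdist⟩ := Metric.mem_closure_iff.mp hfc (ε / 2 / (M + |I| + 1))
      (by positivity)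
    rw [Set.mem_setOf_eq, Metric.tendsto_atTop] at hgS
    obtain ⟨N, hN⟩ := hgS (ε / 2) (by positivity)
    refine ⟨N, fun k hk => ?_⟩
    have hfint : Integrable f (volume.restrict D) := L1.integrable_coeFn f
    have hgint : Integrable g (volume.restrict D) := L1.integrable_coeFn g
    have hsub : ∀ᵐ x ∂(volume.restrict D), (⇑(f - g)) x = f x - g x := by
      filter_upwards [Lp.coeFn_sub f g] with x hx
      simpa using hx
    have e1 : ∫ x in D, (⇑(f - g)) x * b (T ((εk k)⁻¹ • x) ωt)
        = (∫ x in D, f x * b (T ((εk k)⁻¹ • x) ωt))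
          - ∫ x in D, g x * b (T ((εk k)⁻¹ • x) ωt) := by
      rw [integral_congr_ae (hsub.mono fun x hx => by rw [hx])]
      simp only [sub_mul]
      exact integral_sub (hmul _ hfint k) (hmul _ hgint k)
    have e2 : ∫ x in D, (⇑(f - g)) x = (∫ x in D, f x) - ∫ x in D, g x := by
      rw [integral_congr_ae hsub]
      exact integral_sub hfint hgint
    have hkey := key (f - g) k
    rw [e1, e2] at hkey
    have hdnorm : ‖f - g‖ = dist f g := (dist_eq_norm f g).symm
    rw [hdnorm] at hkey
    have hb2 := hN k hk
    rw [Real.dist_eq] at hb2 ⊢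
    have hrw : (∫ x in D, f x * b (T ((εk k)⁻¹ • x) ωt)) - (∫ x in D, f x) * I
        = (((∫ x in D, f x * b (T ((εk k)⁻¹ • x) ωt))
              - ∫ x in D, g x * b (T ((εk k)⁻¹ • x) ωt))
            - ((∫ x in D, f x) - ∫ x in D, g x) * I)
          + ((∫ x in D, g x * b (T ((εk k)⁻¹ • x) ωt)) - (∫ x in D, g x) * I) := by
      ring
    rw [hrw]
    calc |_ + _| ≤ _ + _ := abs_add_le _ _
      _ < ε := by
        have hd0 : (0:ℝ) ≤ dist f g := dist_nonneg
        have : (M + |I|) * dist f g ≤ (M + |I| + 1) * (ε / 2 / (M + |I| + 1)) := by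
          refine mul_le_mul (by linarith [abs_nonneg I]) hdist.le hd0 (by positivity)
        rw [mul_div_cancel₀ _ hMI.ne'] at this
        linarith [hkey.trans this]
  · intro f g hfg hfi hPf
    have h1 : ∀ k : ℕ, ∫ x in D, f x * b (T ((εk k)⁻¹ • x) ωt)
        = ∫ x in D, g x * b (T ((εk k)⁻¹ • x) ωt) :=
      fun k => integral_congr_ae (hfg.mono fun x hx => by simp only [hx])
    have h2 : ∫ x in D, f x = ∫ x in D, g x := integral_congr_ae hfg
    rw [← h2]
    exact hPf.congr h1
/-- strong convergence `v^k → v̄` in `L²(D)` implies strong two-scale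
convergence of `(v^k)` to `v⁰(x,ω) := v̄(x)`. -/
theorem stmt11 {d : ℕ} {Ω : Type*} [MetricSpace Ω] [CompactSpace Ω]
    [MeasurableSpace Ω] [BorelSpace Ω]
    (μ : Measure Ω) [IsProbabilityMeasure μ]
    (T : EuclideanSpace ℝ (Fin d) → Ω → Ω)
    (hTmeas : Measurable (Function.uncurry T))
    (ωt : Ω)
    (htyp : ∀ g : Ω → ℝ, Continuous g →
      ∀ A : Set (EuclideanSpace ℝ (Fin d)),
        MeasurableSet A → Bornology.IsBounded A → 0 < volume A →
        Tendsto (fun t : ℝ =>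
            (1 / (t ^ d * (volume A).toReal)) * ∫ x in t • A, g (T x ωt))
          atTop (𝓝 (∫ ω', g ω' ∂μ)))
    (D : Set (EuclideanSpace ℝ (Fin d))) (hDo : IsOpen D)
    (hDb : Bornology.IsBounded D)
    (εk : ℕ → ℝ) (hεpos : ∀ k, 0 < εk k) (hε0 : Tendsto εk atTop (𝓝 0))
    (v : ℕ → EuclideanSpace ℝ (Fin d) → ℝ) (vbar : EuclideanSpace ℝ (Fin d) → ℝ)
    (hv : ∀ k, MemLp (v k) 2 (volume.restrict D))
    (hvbar : MemLp vbar 2 (volume.restrict D))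
    (hconv : Tendsto (fun k => eLpNorm (v k - vbar) 2 (volume.restrict D))
      atTop (𝓝 0)) :
    (∀ φ : EuclideanSpace ℝ (Fin d) → ℝ,
      ContDiff ℝ (⊤ : ℕ∞) φ → HasCompactSupport φ → tsupport φ ⊆ D →
      ∀ b : Ω → ℝ, Continuous b →
        Tendsto (fun k => ∫ x in D, v k x * φ x * b (T ((εk k)⁻¹ • x) ωt))
          atTop (𝓝 ((∫ x in D, vbar x * φ x) * ∫ ω', b ω' ∂μ))) ∧
    Tendsto (fun k => (eLpNorm (v k) 2 (volume.restrict D)).toReal)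
      atTop
      (𝓝 ((eLpNorm (fun p : EuclideanSpace ℝ (Fin d) × Ω => vbar p.1) 2
        ((volume.restrict D).prod μ)).toReal)) := by
  haveI : IsFiniteMeasure (volume.restrict D) :=
    ⟨by rw [Measure.restrict_apply_univ]; exact hDb.measure_lt_top⟩
  have hD : MeasurableSet D := hDo.measurableSet
  have htk : Tendsto (fun k => (εk k)⁻¹) atTop atTop := by
    have : Tendsto εk atTop (𝓝[>] 0) :=
      tendsto_nhdsWithin_iff.mpr ⟨hε0, Filter.Eventually.of_forall fun k => hεpos k⟩
    exact this.inv_tendsto_nhdsGT_zero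
  have hsub2 : ∀ k, MemLp (v k - vbar) 2 (volume.restrict D) := fun k => (hv k).sub hvbar
  have hvint : Integrable vbar (volume.restrict D) := hvbar.integrable one_le_two
  have hmul : ∀ h q : EuclideanSpace ℝ (Fin d) → ℝ, Integrable h (volume.restrict D) →
      AEStronglyMeasurable q (volume.restrict D) → ∀ C : ℝ, (∀ x, ‖q x‖ ≤ C) →
      Integrable (fun x => h x * q x) (volume.restrict D) := by
    intro h q hh hq C hC
    exact (hh.bdd_mul hq (Filter.Eventually.of_forall hC)).congr
      (Filter.Eventually.of_forall fun x => mul_comm _ _)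
  constructor
  · intro φ hφ hφc hφs b hb
    obtain ⟨M, hM⟩ : ∃ M : ℝ, ∀ ω', ‖b ω'‖ ≤ M := by
      obtain ⟨C, hC⟩ := isBounded_iff_forall_norm_le.mp (isCompact_range hb).isBounded
      exact ⟨C, fun ω' => hC _ (Set.mem_range_self _)⟩
    have hM0 : 0 ≤ M := (norm_nonneg _).trans (hM ωt)
    obtain ⟨Cφ, hCφ⟩ := hφc.exists_bound_of_continuous hφ.continuous
    have hCφ0 : 0 ≤ Cφ := (norm_nonneg (φ 0)).trans (hCφ 0)
    have hgkmeas : ∀ t : ℝ, Measurable fun x : EuclideanSpace ℝ (Fin d) => b (T (t • x) ωt) :=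
      fun t => hb.measurable.comp
        (hTmeas.comp ((measurable_id.const_smul t).prodMk measurable_const))
    have hφmeas : AEStronglyMeasurable φ (volume.restrict D) :=
      hφ.continuous.aestronglyMeasurable
    have hvkint : ∀ k, Integrable (v k) (volume.restrict D) :=
      fun k => (hv k).integrable one_le_two
    have hsubint : ∀ k, Integrable (fun x => v k x - vbar x) (volume.restrict D) :=
      fun k => (hvkint k).sub hvint
    have int1 : ∀ k : ℕ, Integrable
        (fun x => (v k x - vbar x) * φ x * b (T ((εk k)⁻¹ • x) ωt)) (volume.restrict D) :=
      fun k => hmul _ _ (hmul _ _ (hsubint k) hφmeas Cφ hCφ)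
        (hgkmeas _).aestronglyMeasurable M (fun x => hM _)
    have intf : Integrable (fun x => vbar x * φ x) (volume.restrict D) :=
      hmul _ _ hvint hφmeas Cφ hCφ
    have int2 : ∀ k : ℕ, Integrable
        (fun x => vbar x * φ x * b (T ((εk k)⁻¹ • x) ωt)) (volume.restrict D) :=
      fun k => hmul _ _ intf (hgkmeas _).aestronglyMeasurable M (fun x => hM _)
    -- L¹ convergence of v k - vbar
    have hc : Tendsto (fun k => eLpNorm (v k - vbar) 1 (volume.restrict D)) atTop (𝓝 0) := by
      have he : (0:ℝ) ≤ 1 / (1 : ℝ≥0∞).toReal - 1 / (2 : ℝ≥0∞).toReal := by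
        rw [ENNReal.toReal_one, ENNReal.toReal_ofNat]; norm_num
      have hcne : (volume.restrict D) Set.univ ^
          (1 / (1 : ℝ≥0∞).toReal - 1 / (2 : ℝ≥0∞).toReal) ≠ ∞ :=
        ENNReal.rpow_ne_top_of_nonneg he (measure_ne_top _ _)
      have h2 := ENNReal.Tendsto.mul_const hconv (Or.inr hcne)
      rw [zero_mul] at h2
      exact tendsto_of_tendsto_of_tendsto_of_le_of_le tendsto_const_nhds h2
        (fun k => zero_le)
        (fun k => eLpNorm_le_eLpNorm_mul_rpow_measure_univ one_le_two (hsub2 k).1)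
    have hnorm : Tendsto (fun k => ∫ x in D, ‖v k x - vbar x‖) atTop (𝓝 0) := by
      have h3 : Tendsto (fun k => (eLpNorm (v k - vbar) 1 (volume.restrict D)).toReal)
          atTop (𝓝 0) := by
        simpa [Function.comp_def] using (ENNReal.tendsto_toReal (by simp)).comp hc
      refine h3.congr fun k => ?_
      rw [eLpNorm_one_eq_lintegral_enorm, ← integral_norm_eq_lintegral_enorm (hsub2 k).1]
      exact integral_congr_ae (Filter.Eventually.of_forall fun x => by simp)
    have hS1 : Tendsto
        (fun k => ∫ x in D, (v k x - vbar x) * φ x * b (T ((εk k)⁻¹ • x) ωt))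
        atTop (𝓝 0) := by
      refine squeeze_zero_norm (fun k => ?_) (by simpa using hnorm.const_mul (Cφ * M))
      calc ‖∫ x in D, (v k x - vbar x) * φ x * b (T ((εk k)⁻¹ • x) ωt)‖
          ≤ ∫ x in D, ‖(v k x - vbar x) * φ x * b (T ((εk k)⁻¹ • x) ωt)‖ :=
            norm_integral_le_integral_norm _
        _ ≤ ∫ x in D, Cφ * M * ‖v k x - vbar x‖ := by
            refine integral_mono (int1 k).norm (((hsubint k).norm).const_mul _) fun x => ?_
            rw [norm_mul, norm_mul]
            calc ‖v k x - vbar x‖ * ‖φ x‖ * ‖b (T ((εk k)⁻¹ • x) ωt)‖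
                ≤ ‖v k x - vbar x‖ * Cφ * M := by
                  gcongr
                  exacts [hCφ x, hM _]
              _ = Cφ * M * ‖v k x - vbar x‖ := by ring
        _ = Cφ * M * ∫ x in D, ‖v k x - vbar x‖ := integral_const_mul _ _
    have hS2 : Tendsto
        (fun k => ∫ x in D, vbar x * φ x * b (T ((εk k)⁻¹ • x) ωt)) atTop
        (𝓝 ((∫ x in D, vbar x * φ x) * ∫ ω', b ω' ∂μ)) :=
      auxMain T ωt b _ M hgkmeas hM (htyp b hb) εk hεpos htk D hD hDb intf
    have hfinal := hS1.add hS2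
    rw [zero_add] at hfinal
    refine hfinal.congr fun k => ?_
    rw [← integral_add (int1 k) (int2 k)]
    exact integral_congr_ae (Filter.Eventually.of_forall fun x => by ring)
  · have heq : eLpNorm (fun p : EuclideanSpace ℝ (Fin d) × Ω => vbar p.1) 2
        ((volume.restrict D).prod μ) = eLpNorm vbar 2 (volume.restrict D) := by
      have hmap : Measure.map Prod.fst ((volume.restrict D).prod μ) = volume.restrict D := by
        rw [Measure.map_fst_prod]; simp
      have h1 : AEStronglyMeasurable vbar
          (Measure.map Prod.fst ((volume.restrict D).prod μ)) := by
        rw [hmap]; exact hvbar.1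
      have h2 := eLpNorm_map_measure (p := (2:ℝ≥0∞)) h1 measurable_fst.aemeasurable
      rw [hmap] at h2
      exact h2.symm
    rw [heq]
    have hcR : Tendsto (fun k => (eLpNorm (v k - vbar) 2 (volume.restrict D)).toReal)
        atTop (𝓝 0) := by
      simpa [Function.comp_def] using (ENNReal.tendsto_toReal (by simp)).comp hconv
    have hbound : ∀ k, |(eLpNorm (v k) 2 (volume.restrict D)).toReal
        - (eLpNorm vbar 2 (volume.restrict D)).toReal|
        ≤ (eLpNorm (v k - vbar) 2 (volume.restrict D)).toReal := by
      intro k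
      have hfa : eLpNorm (v k) 2 (volume.restrict D) ≠ ∞ := (hv k).2.ne
      have hfb : eLpNorm vbar 2 (volume.restrict D) ≠ ∞ := hvbar.2.ne
      have hfc : eLpNorm (v k - vbar) 2 (volume.restrict D) ≠ ∞ := (hsub2 k).2.ne
      have h1 : eLpNorm (v k) 2 (volume.restrict D)
          ≤ eLpNorm (v k - vbar) 2 (volume.restrict D)
            + eLpNorm vbar 2 (volume.restrict D) := by
        have := eLpNorm_add_le (hsub2 k).1 hvbar.1 one_le_two
        simpa [sub_add_cancel] using this
      have h2 : eLpNorm vbar 2 (volume.restrict D)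
          ≤ eLpNorm (v k - vbar) 2 (volume.restrict D)
            + eLpNorm (v k) 2 (volume.restrict D) := by
        have h3 := eLpNorm_add_le (hvbar.sub (hv k)).1 (hv k).1 one_le_two
        rw [sub_add_cancel, eLpNorm_sub_comm] at h3
        exact h3
      have t1 := ENNReal.toReal_mono (ENNReal.add_ne_top.mpr ⟨hfc, hfb⟩) h1
      have t2 := ENNReal.toReal_mono (ENNReal.add_ne_top.mpr ⟨hfc, hfa⟩) h2
      rw [ENNReal.toReal_add hfc hfb] at t1
      rw [ENNReal.toReal_add hfc hfa] at t2
      rw [abs_sub_le_iff]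
      constructor <;> linarith
    have hsq : Tendsto (fun k => (eLpNorm (v k) 2 (volume.restrict D)).toReal
        - (eLpNorm vbar 2 (volume.restrict D)).toReal) atTop (𝓝 0) :=
      squeeze_zero_norm hbound hcR
    have := hsq.add_const ((eLpNorm vbar 2 (volume.restrict D)).toReal)
    rw [zero_add] at this
    exact this.congr fun k => by ring
end

section
/- Let Ω be a compact metric space with Borel probability measure μ and let T : ℝ^d × Ω → Ω be a jointly measurable group action (T_0 = id, T_{x+y} = T_x ∘ T_y) such that each T_x preserves μ. Let ξ ∈ ℝ^d and suppose there is a sequence (u_k) of functions in C¹(Ω) such that D_ω u_k converges in L²(Ω, μ; ℝ^d) to the constant function ω ↦ ξ. Then ξ = 0. -/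
open MeasureTheory Filter Topology

/-- A coordinate of a vector in Euclidean space is bounded by the norm. -/
lemma stmt14_coord_le_norm {d : ℕ} (x : EuclideanSpace ℝ (Fin d)) (i : Fin d) :
    |x i| ≤ ‖x‖ := by
  rw [EuclideanSpace.norm_eq]
  rw [Real.le_sqrt (abs_nonneg _) (Finset.sum_nonneg fun j _ => sq_nonneg _)]
  have : |x i| ^ 2 = ‖x i‖ ^ 2 := by rw [Real.norm_eq_abs]
  rw [this]
  exact Finset.single_le_sum (f := fun j => ‖x j‖ ^ 2)
    (fun j _ => sq_nonneg _) (Finset.mem_univ i)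

/-- non-degeneracy: if the stochastic gradients `D_ω u_k` of functions
`u_k ∈ C¹(Ω)` converge in `L²(Ω,μ;ℝ^d)` to a constant vector `ξ`, then `ξ = 0`. -/
theorem stmt14 {d : ℕ} {Ω : Type*} [MetricSpace Ω] [CompactSpace Ω]
    [MeasurableSpace Ω] [BorelSpace Ω]
    (μ : Measure Ω) [IsProbabilityMeasure μ]
    (T : EuclideanSpace ℝ (Fin d) → Ω → Ω)
    (hTmeas : Measurable (Function.uncurry T))
    (hT0 : T 0 = id)
    (hTadd : ∀ x y, T (x + y) = T x ∘ T y)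
    (hTpres : ∀ x, MeasurePreserving (T x) μ μ)
    (ξ : EuclideanSpace ℝ (Fin d))
    (u : ℕ → Ω → ℝ) (Du : ℕ → Fin d → Ω → ℝ)
    (hu : ∀ k, Continuous (u k))
    (hDu : ∀ k i, Continuous (Du k i))
    (hdiff : ∀ k ω (i : Fin d),
      Tendsto (fun δ : ℝ =>
          (u k (T (δ • EuclideanSpace.single i (1:ℝ)) ω) - u k ω) / δ)
        (𝓝[≠] 0) (𝓝 (Du k i ω)))
    (hconv : Tendsto (fun k =>
        eLpNorm (fun ω => (EuclideanSpace.equiv (Fin d) ℝ).symm (fun i => Du k i ω) - ξ) 2 μ)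
      atTop (𝓝 0)) :
    ξ = 0 := by
  -- each `T x` is measurable
  have hTx : ∀ x, Measurable (T x) := fun x =>
    hTmeas.comp (measurable_const.prodMk measurable_id)
  -- continuous functions on a compact space are integrable
  have hcint : ∀ (f : Ω → ℝ), Continuous f → Integrable f μ := by
    intro f hf
    exact hf.integrable_of_hasCompactSupport
      (IsCompact.of_isClosed_subset isCompact_univ (isClosed_tsupport _) (Set.subset_univ _))
  -- Key step: the integral of each stochastic partial derivative vanishes
  have key : ∀ k i, ∫ ω, Du k i ω ∂μ = 0 := by
    intro k i
    obtain ⟨M, hM⟩ := isCompact_univ.exists_bound_of_continuousOn (hDu k i).continuousOn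
    set v : EuclideanSpace ℝ (Fin d) := EuclideanSpace.single i (1:ℝ) with hv
    -- derivative of `s ↦ u k (T (s • v) ω)`
    have hder : ∀ ω (s : ℝ), HasDerivAt (fun s : ℝ => u k (T (s • v) ω))
        (Du k i (T (s • v) ω)) s := by
      intro ω s
      rw [hasDerivAt_iff_tendsto_slope]
      have h1 : Tendsto (fun y : ℝ => y - s) (𝓝[≠] s) (𝓝[≠] (0:ℝ)) := by
        rw [tendsto_nhdsWithin_iff]
        constructor
        · have : Tendsto (fun y : ℝ => y - s) (𝓝 s) (𝓝 (s - s)) :=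
            (continuous_id.sub continuous_const).tendsto s
          simpa using this.mono_left nhdsWithin_le_nhds
        · filter_upwards [self_mem_nhdsWithin] with y hy
          simpa [sub_eq_zero] using hy
      have h2 := (hdiff k (T (s • v) ω) i).comp h1
      refine h2.congr fun y => ?_
      show (u k (T ((y - s) • v) (T (s • v) ω)) - u k (T (s • v) ω)) / (y - s) = _
      have harg : T ((y - s) • v) (T (s • v) ω) = T (y • v) ω := by
        have := hTadd ((y - s) • v) (s • v)
        calc T ((y - s) • v) (T (s • v) ω) = T ((y - s) • v + s • v) ω := by
              rw [this]; rfl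
          _ = T (y • v) ω := by rw [← add_smul, sub_add_cancel]
      rw [harg, slope_def_field]
    -- Lipschitz bound from the mean value inequality
    have hlip : ∀ ω (δ : ℝ), ‖u k (T (δ • v) ω) - u k ω‖ ≤ M * ‖δ‖ := by
      intro ω δ
      have h0 : u k (T ((0:ℝ) • v) ω) = u k ω := by
        rw [zero_smul, hT0]; rfl
      have := Convex.norm_image_sub_le_of_norm_hasDerivWithin_le
        (f := fun s : ℝ => u k (T (s • v) ω)) (f' := fun s => Du k i (T (s • v) ω))
        (fun s _ => (hder ω s).hasDerivWithinAt)
        (fun s _ => hM _ (Set.mem_univ _)) convex_univ (Set.mem_univ (0:ℝ))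
        (Set.mem_univ δ)
      have h2 : ‖u k (T (δ • v) ω) - u k (T ((0:ℝ) • v) ω)‖ ≤ M * ‖δ - 0‖ := this
      rw [h0] at h2
      simpa using h2
    -- each difference quotient integrates to zero
    have hquotmeas : ∀ δ : ℝ, AEStronglyMeasurable
        (fun ω => (u k (T (δ • v) ω) - u k ω) / δ) μ := by
      intro δ
      exact ((((hu k).measurable.comp (hTx (δ • v))).sub
        (hu k).measurable).div_const δ).aestronglyMeasurable
    have hcompint : ∀ x, Integrable (fun ω => u k (T x ω)) μ := by
      intro x
      exact ((hTpres x).integrable_comp (hu k).aestronglyMeasurable).mpr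
        (hcint _ (hu k))
    have hintcomp : ∀ x, ∫ ω, u k (T x ω) ∂μ = ∫ ω, u k ω ∂μ := by
      intro x
      have hmap := (hTpres x).map_eq
      have hm : AEStronglyMeasurable (u k) (Measure.map (T x) μ) := by
        rw [hmap]; exact (hu k).aestronglyMeasurable
      calc ∫ ω, u k (T x ω) ∂μ
          = ∫ y, u k y ∂(Measure.map (T x) μ) :=
            (integral_map (hTx x).aemeasurable hm).symm
        _ = ∫ y, u k y ∂μ := by rw [hmap]
    have hint0 : ∀ δ : ℝ, ∫ ω, (u k (T (δ • v) ω) - u k ω) / δ ∂μ = 0 := by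
      intro δ
      rw [integral_div, integral_sub (hcompint (δ • v)) (hcint _ (hu k)),
        hintcomp, sub_self, zero_div]
    -- dominated convergence along `δ_n = 1/(n+1)`
    set δn : ℕ → ℝ := fun n => ((n : ℝ) + 1)⁻¹ with hδn
    have hδne : ∀ n, δn n ≠ 0 := fun n => by positivity
    have hδtend : Tendsto δn atTop (𝓝[≠] (0:ℝ)) := by
      rw [tendsto_nhdsWithin_iff]
      constructor
      · simpa [hδn, one_div] using (tendsto_one_div_add_atTop_nhds_zero_nat :
          Tendsto (fun n : ℕ => 1 / ((n : ℝ) + 1)) atTop (𝓝 0))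
      · exact Eventually.of_forall fun n => hδne n
    have hDC : Tendsto (fun n => ∫ ω, (u k (T (δn n • v) ω) - u k ω) / δn n ∂μ)
        atTop (𝓝 (∫ ω, Du k i ω ∂μ)) := by
      refine tendsto_integral_of_dominated_convergence (fun _ => M)
        (fun n => hquotmeas (δn n)) (integrable_const M) (fun n => ?_) ?_
      · refine Eventually.of_forall fun ω => ?_
        rw [norm_div]
        rw [div_le_iff₀ (norm_pos_iff.mpr (hδne n))]
        exact hlip ω (δn n)
      · refine Eventually.of_forall fun ω => ?_
        exact (hdiff k ω i).comp hδtend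
    have hzero : Tendsto (fun _ : ℕ => (0:ℝ)) atTop (𝓝 (∫ ω, Du k i ω ∂μ)) :=
      hDC.congr fun n => hint0 (δn n)
    exact tendsto_nhds_unique hzero tendsto_const_nhds
  -- Step 4: pass to the limit in L²
  have hmeas2 : ∀ k i, AEStronglyMeasurable (fun ω => Du k i ω - ξ i) μ :=
    fun k i => ((hDu k i).sub continuous_const).aestronglyMeasurable
  have hint2 : ∀ k i, Integrable (fun ω => Du k i ω - ξ i) μ :=
    fun k i => (hcint _ (hDu k i)).sub (integrable_const _)
  have hbound : ∀ (k) (i : Fin d), ENNReal.ofReal |ξ i| ≤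
      eLpNorm (fun ω => (EuclideanSpace.equiv (Fin d) ℝ).symm (fun i => Du k i ω) - ξ) 2 μ := by
    intro k i
    have h1 : |ξ i| = ‖∫ ω, (Du k i ω - ξ i) ∂μ‖ := by
      rw [integral_sub (hcint _ (hDu k i)) (integrable_const _), key k i, integral_const]
      simp
    have h2 : ‖∫ ω, (Du k i ω - ξ i) ∂μ‖ ≤ ∫ ω, ‖Du k i ω - ξ i‖ ∂μ :=
      norm_integral_le_integral_norm _
    have h3 : ENNReal.ofReal (∫ ω, ‖Du k i ω - ξ i‖ ∂μ)
        = ∫⁻ ω, ‖Du k i ω - ξ i‖₊ ∂μ := ofReal_integral_norm_eq_lintegral_enorm (hint2 k i)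
    have h4 : eLpNorm (fun ω => Du k i ω - ξ i) 1 μ = ∫⁻ ω, ‖Du k i ω - ξ i‖₊ ∂μ :=
      eLpNorm_one_eq_lintegral_enorm
    have h5 : eLpNorm (fun ω => Du k i ω - ξ i) 1 μ
        ≤ eLpNorm (fun ω => Du k i ω - ξ i) 2 μ :=
      eLpNorm_le_eLpNorm_of_exponent_le (by norm_num) (hmeas2 k i)
    have h6 : eLpNorm (fun ω => Du k i ω - ξ i) 2 μ ≤
        eLpNorm (fun ω => (EuclideanSpace.equiv (Fin d) ℝ).symm (fun i => Du k i ω) - ξ) 2 μ := by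
      refine eLpNorm_mono fun ω => ?_
      have hco := stmt14_coord_le_norm
        ((EuclideanSpace.equiv (Fin d) ℝ).symm (fun j => Du k j ω) - ξ) i
      simpa using hco
    calc ENNReal.ofReal |ξ i| ≤ ENNReal.ofReal (∫ ω, ‖Du k i ω - ξ i‖ ∂μ) := by
          rw [h1]; exact ENNReal.ofReal_le_ofReal h2
      _ = eLpNorm (fun ω => Du k i ω - ξ i) 1 μ := by rw [h3, h4]
      _ ≤ _ := le_trans h5 h6
  have hxi : ∀ i, ξ i = 0 := by
    intro i
    have hle : ENNReal.ofReal |ξ i| ≤ 0 :=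
      ge_of_tendsto hconv (Eventually.of_forall fun k => hbound k i)
    have h0 : ENNReal.ofReal |ξ i| = 0 := le_antisymm hle zero_le
    have := ENNReal.ofReal_eq_zero.mp h0
    exact abs_eq_zero.mp (le_antisymm this (abs_nonneg _))
  ext i
  exact hxi i
end

section
/- Let Ω be a compact metric space with Borel probability measure μ and let T : ℝ^d × Ω → Ω be a jointly measurable group action (T_0 = id, T_{x+y} = T_x ∘ T_y) such that each T_x preserves μ, and assume the action is ergodic: every Borel set A ⊆ Ω satisfying μ(T_x^{-1} A Δ A) = 0 for all x ∈ ℝ^d has μ(A) ∈ {0, 1}. Let u ∈ L²(Ω, μ) and suppose there is a sequence (u_k) in C¹(Ω) with u_k → u in L²(Ω, μ) and D_ω u_k → 0 in L²(Ω, μ; ℝ^d). Then u is constant μ-almost surely: there exists c ∈ ℝ with u = c μ-almost everywhere. -/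
open MeasureTheory Filter Topology

private lemma key_est {d : ℕ} {Ω : Type*} [MetricSpace Ω] [CompactSpace Ω]
    [MeasurableSpace Ω] [BorelSpace Ω] [Nonempty Ω]
    (μ : Measure Ω) [IsProbabilityMeasure μ]
    (T : EuclideanSpace ℝ (Fin d) → Ω → Ω)
    (hTmeas : Measurable (Function.uncurry T))
    (hT0 : T 0 = id)
    (hTadd : ∀ x y, T (x + y) = T x ∘ T y)
    (hTpres : ∀ x, MeasurePreserving (T x) μ μ)
    (v Dv : Ω → ℝ) (hv : Continuous v) (hDv : Continuous Dv) (i : Fin d)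
    (hdiff : ∀ ω, Tendsto (fun δ : ℝ =>
        (v (T (δ • EuclideanSpace.single i (1:ℝ)) ω) - v ω) / δ) (𝓝[≠] 0) (𝓝 (Dv ω)))
    (t : ℝ) (ht : 0 ≤ t) :
    eLpNorm (fun ω => v (T (t • EuclideanSpace.single i (1:ℝ)) ω) - v ω) 1 μ
      ≤ ENNReal.ofReal t * eLpNorm Dv 1 μ := by
  set E : EuclideanSpace ℝ (Fin d) := EuclideanSpace.single i (1:ℝ) with hE
  have hjm : Measurable (fun p : Ω × ℝ => T (p.2 • E) p.1) :=
    hTmeas.comp ((((continuous_id.smul continuous_const).measurable).comp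
      measurable_snd).prodMk measurable_fst)
  have hmeas1 : ∀ ω, Measurable fun s : ℝ => Dv (T (s • E) ω) := fun ω =>
    hDv.measurable.comp (hjm.comp (measurable_const.prodMk measurable_id))
  have hderiv : ∀ ω s, HasDerivAt (fun s : ℝ => v (T (s • E) ω)) (Dv (T (s • E) ω)) s := by
    intro ω s
    rw [hasDerivAt_iff_tendsto_slope_zero]
    refine (hdiff (T (s • E) ω)).congr fun δ => ?_
    have h2 : (s + δ) • E = δ • E + s • E := by rw [add_smul, add_comm]
    rw [h2, hTadd]
    simp [Function.comp, smul_eq_mul, div_eq_inv_mul]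
  obtain ⟨ω₀, -, hb0⟩ := isCompact_univ.exists_isMaxOn Set.univ_nonempty (hDv.norm.continuousOn)
  have hb : ∀ y, ‖Dv y‖ ≤ ‖Dv ω₀‖ := fun y => hb0 (Set.mem_univ y)
  have hint : ∀ ω, IntervalIntegrable (fun s => Dv (T (s • E) ω)) volume 0 t := by
    intro ω
    exact (intervalIntegrable_const (c := ‖Dv ω₀‖)).mono_fun'
      (hmeas1 ω).aestronglyMeasurable (ae_of_all _ fun s => hb _)
  have hFTC : ∀ ω, v (T (t • E) ω) - v ω = ∫ s in (0:ℝ)..t, Dv (T (s • E) ω) := by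
    intro ω
    rw [intervalIntegral.integral_eq_sub_of_hasDerivAt (fun s _ => hderiv ω s) (hint ω)]
    simp [hT0]
  rw [eLpNorm_one_eq_lintegral_enorm, eLpNorm_one_eq_lintegral_enorm]
  calc ∫⁻ ω, ‖v (T (t • E) ω) - v ω‖₊ ∂μ
      = ∫⁻ ω, ‖∫ s in (0:ℝ)..t, Dv (T (s • E) ω)‖₊ ∂μ :=
        lintegral_congr fun ω => by rw [hFTC ω]
    _ ≤ ∫⁻ ω, ∫⁻ s in Set.Ioc 0 t, ‖Dv (T (s • E) ω)‖₊ ∂volume ∂μ := by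
        refine lintegral_mono fun ω => ?_
        rw [intervalIntegral.integral_of_le ht]
        exact enorm_integral_le_lintegral_enorm _
    _ = ∫⁻ s in Set.Ioc 0 t, ∫⁻ ω, ‖Dv (T (s • E) ω)‖₊ ∂μ ∂volume :=
        lintegral_lintegral_swap
          ((measurable_coe_nnreal_ennreal.comp (hDv.measurable.nnnorm.comp hjm)).aemeasurable)
    _ = ∫⁻ _ in Set.Ioc 0 t, ∫⁻ ω, ‖Dv ω‖₊ ∂μ ∂volume := by
        refine setLIntegral_congr_fun measurableSet_Ioc (fun s _ => ?_)
        exact (hTpres (s • E)).lintegral_comp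
          (measurable_coe_nnreal_ennreal.comp hDv.measurable.nnnorm)
    _ = ENNReal.ofReal t * ∫⁻ ω, ‖Dv ω‖₊ ∂μ := by
        rw [setLIntegral_const, Real.volume_Ioc, sub_zero, mul_comm]

/-- ergodicity: for an ergodic measure-preserving jointly measurable
group action of ℝ^d, if `u ∈ L²(Ω)` is approximated in `L²` by `u_k ∈ C¹(Ω)` with
`D_ω u_k → 0` in `L²`, then `u` is μ-a.s. constant. -/
theorem stmt16 {d : ℕ} {Ω : Type*} [MetricSpace Ω] [CompactSpace Ω]
    [MeasurableSpace Ω] [BorelSpace Ω]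
    (μ : Measure Ω) [IsProbabilityMeasure μ]
    (T : EuclideanSpace ℝ (Fin d) → Ω → Ω)
    (hTmeas : Measurable (Function.uncurry T))
    (hT0 : T 0 = id)
    (hTadd : ∀ x y, T (x + y) = T x ∘ T y)
    (hTpres : ∀ x, MeasurePreserving (T x) μ μ)
    (herg : ∀ A : Set Ω, MeasurableSet A →
      (∀ x, μ (symmDiff (T x ⁻¹' A) A) = 0) → μ A = 0 ∨ μ A = 1)
    (u : Ω → ℝ) (hu : MemLp u 2 μ)
    (uk : ℕ → Ω → ℝ) (Duk : ℕ → Fin d → Ω → ℝ)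
    (huk : ∀ k, Continuous (uk k))
    (hDuk : ∀ k i, Continuous (Duk k i))
    (hdiff : ∀ k ω (i : Fin d),
      Tendsto (fun δ : ℝ =>
          (uk k (T (δ • EuclideanSpace.single i (1:ℝ)) ω) - uk k ω) / δ)
        (𝓝[≠] 0) (𝓝 (Duk k i ω)))
    (hukconv : Tendsto (fun k => eLpNorm (uk k - u) 2 μ) atTop (𝓝 0))
    (hDukconv : ∀ i, Tendsto (fun k => eLpNorm (Duk k i) 2 μ) atTop (𝓝 0)) :
    ∃ c : ℝ, u =ᵐ[μ] fun _ => c := by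
  classical
  have hΩ : Nonempty Ω := by
    by_contra h
    have h1 : μ Set.univ = 1 := measure_univ
    rw [Set.univ_eq_empty_iff.mpr (not_nonempty_iff.mp h), measure_empty] at h1
    exact zero_ne_one h1
  obtain ⟨f, hf, hfu⟩ : ∃ f, StronglyMeasurable f ∧ u =ᵐ[μ] f :=
    ⟨hu.1.mk u, hu.1.stronglyMeasurable_mk, hu.1.ae_eq_mk⟩
  have hfm : Measurable f := hf.measurable
  set E : Fin d → EuclideanSpace ℝ (Fin d) := fun i => EuclideanSpace.single i 1 with hE
  -- L¹ convergences
  have ha2 : Tendsto (fun k => eLpNorm (fun ω => f ω - uk k ω) 2 μ) atTop (𝓝 0) := by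
    refine hukconv.congr fun k => ?_
    rw [show (uk k - u) = -(fun ω => u ω - uk k ω) by funext ω; simp [Pi.sub_apply],
      eLpNorm_neg]
    exact (eLpNorm_congr_ae (hfu.mono fun ω h => by simp [h])).symm
  have ha1 : Tendsto (fun k => eLpNorm (fun ω => f ω - uk k ω) 1 μ) atTop (𝓝 0) := by
    refine tendsto_of_tendsto_of_tendsto_of_le_of_le tendsto_const_nhds ha2
      (fun k => zero_le) fun k => ?_
    exact eLpNorm_le_eLpNorm_of_exponent_le one_le_two
      (hf.aestronglyMeasurable.sub (huk k).aestronglyMeasurable)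
  have hb1 : ∀ i, Tendsto (fun k => eLpNorm (Duk k i) 1 μ) atTop (𝓝 0) := by
    intro i
    refine tendsto_of_tendsto_of_tendsto_of_le_of_le tendsto_const_nhds (hDukconv i)
      (fun k => zero_le) fun k => ?_
    exact eLpNorm_le_eLpNorm_of_exponent_le one_le_two (hDuk k i).aestronglyMeasurable
  -- invariance in coordinate directions, t ≥ 0
  have inv1 : ∀ (i : Fin d) (t : ℝ), 0 ≤ t → (fun ω => f (T (t • E i) ω)) =ᵐ[μ] f := by
    intro i t ht
    set x := t • E i with hx
    have hfT : AEStronglyMeasurable (fun ω => f (T x ω)) μ :=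
      (hf.comp_measurable (hTpres x).measurable).aestronglyMeasurable
    have hL : ∀ k, eLpNorm (fun ω => f (T x ω) - f ω) 1 μ ≤
        2 * eLpNorm (fun ω => f ω - uk k ω) 1 μ +
          ENNReal.ofReal t * eLpNorm (Duk k i) 1 μ := by
      intro k
      have hsplit : (fun ω => f (T x ω) - f ω) =
          (fun ω => f (T x ω) - uk k (T x ω)) +
            ((fun ω => uk k (T x ω) - uk k ω) + (fun ω => uk k ω - f ω)) := by
        funext ω; simp only [Pi.add_apply]; ring
      have hASM1 : AEStronglyMeasurable (fun ω => f (T x ω) - uk k (T x ω)) μ :=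
        hfT.sub ((huk k).measurable.comp (hTpres x).measurable).aestronglyMeasurable
      have hASM2 : AEStronglyMeasurable (fun ω => uk k (T x ω) - uk k ω) μ :=
        ((huk k).measurable.comp (hTpres x).measurable).aestronglyMeasurable.sub
          (huk k).aestronglyMeasurable
      have hASM3 : AEStronglyMeasurable (fun ω => uk k ω - f ω) μ :=
        (huk k).aestronglyMeasurable.sub hf.aestronglyMeasurable
      have hsub : AEStronglyMeasurable (fun ω => f ω - uk k ω) μ :=
        hf.aestronglyMeasurable.sub (huk k).aestronglyMeasurable
      have h1 : eLpNorm (fun ω => f (T x ω) - uk k (T x ω)) 1 μ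
          = eLpNorm (fun ω => f ω - uk k ω) 1 μ := by
        have h1' := eLpNorm_comp_measurePreserving (p := 1) hsub (hTpres x)
        simpa [Function.comp_def] using h1'
      have h3 : eLpNorm (fun ω => uk k ω - f ω) 1 μ
          = eLpNorm (fun ω => f ω - uk k ω) 1 μ := by
        rw [show (fun ω => uk k ω - f ω) = -(fun ω => f ω - uk k ω) by funext ω; simp,
          eLpNorm_neg]
      have h2 := key_est μ T hTmeas hT0 hTadd hTpres (uk k) (Duk k i) (huk k)
        (hDuk k i) i (fun ω => hdiff k ω i) t ht
      have step := (eLpNorm_add_le hASM1 (hASM2.add hASM3) le_rfl).trans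
        (add_le_add_right (eLpNorm_add_le hASM2 hASM3 le_rfl) _)
      calc eLpNorm (fun ω => f (T x ω) - f ω) 1 μ
          ≤ eLpNorm (fun ω => f (T x ω) - uk k (T x ω)) 1 μ +
            (eLpNorm (fun ω => uk k (T x ω) - uk k ω) 1 μ +
             eLpNorm (fun ω => uk k ω - f ω) 1 μ) := by
            rw [hsplit]; exact step
        _ = 2 * eLpNorm (fun ω => f ω - uk k ω) 1 μ +
            eLpNorm (fun ω => uk k (T x ω) - uk k ω) 1 μ := by rw [h1, h3]; ring
        _ ≤ 2 * eLpNorm (fun ω => f ω - uk k ω) 1 μ +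
            ENNReal.ofReal t * eLpNorm (Duk k i) 1 μ := add_le_add_right h2 _
    have hlim : Tendsto (fun k => 2 * eLpNorm (fun ω => f ω - uk k ω) 1 μ +
        ENNReal.ofReal t * eLpNorm (Duk k i) 1 μ) atTop (𝓝 0) := by
      have t1 := ENNReal.Tendsto.const_mul ha1 (Or.inr (ENNReal.ofNat_ne_top : (2:ENNReal) ≠ ⊤))
      have t2 : Tendsto (fun k => ENNReal.ofReal t * eLpNorm (Duk k i) 1 μ) atTop
          (𝓝 (ENNReal.ofReal t * 0)) :=
        ENNReal.Tendsto.const_mul (hb1 i) (Or.inr ENNReal.ofReal_ne_top)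
      simpa using t1.add t2
    have hzero : eLpNorm (fun ω => f (T x ω) - f ω) 1 μ = 0 :=
      le_zero_iff.mp (ge_of_tendsto' hlim hL)
    have hae := (eLpNorm_eq_zero_iff (hfT.sub hf.aestronglyMeasurable) one_ne_zero).mp hzero
    filter_upwards [hae] with ω hω
    exact sub_eq_zero.mp hω
  -- closure properties
  have invadd : ∀ x y, (fun ω => f (T x ω)) =ᵐ[μ] f → (fun ω => f (T y ω)) =ᵐ[μ] f →
      (fun ω => f (T (x + y) ω)) =ᵐ[μ] f := by
    intro x y hxx hyy
    have h1 : (fun ω => f (T x ω)) ∘ T y =ᵐ[μ] f ∘ T y := by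
      refine ae_eq_comp (hTpres y).aemeasurable ?_
      rwa [(hTpres y).map_eq]
    have h2 : (fun ω => f (T (x + y) ω)) = (fun ω => f (T x ω)) ∘ T y := by
      funext ω; rw [hTadd x y]; rfl
    rw [h2]
    exact h1.trans hyy
  have invneg : ∀ x, (fun ω => f (T x ω)) =ᵐ[μ] f → (fun ω => f (T (-x) ω)) =ᵐ[μ] f := by
    intro x hxx
    have h1 : (fun ω => f (T x ω)) ∘ T (-x) =ᵐ[μ] f ∘ T (-x) := by
      refine ae_eq_comp (hTpres (-x)).aemeasurable ?_
      rwa [(hTpres (-x)).map_eq]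
    have h2 : (fun ω => f (T x ω)) ∘ T (-x) = f := by
      funext ω
      show f (T x (T (-x) ω)) = f ω
      have h3 : T x (T (-x) ω) = T (x + -x) ω := by rw [hTadd]; rfl
      rw [h3, add_neg_cancel, hT0, id]
    rw [h2] at h1
    exact h1.symm
  -- full invariance
  have invAll : ∀ x, (fun ω => f (T x ω)) =ᵐ[μ] f := by
    intro x
    have hts : ∀ (i : Fin d) (t : ℝ), (fun ω => f (T (t • E i) ω)) =ᵐ[μ] f := by
      intro i t
      rcases le_total 0 t with h | h
      · exact inv1 i t h
      · have h1 := invneg _ (inv1 i (-t) (by linarith))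
        simpa [neg_smul] using h1
    have hsum : ∀ s : Finset (Fin d),
        (fun ω => f (T (∑ i ∈ s, x i • E i) ω)) =ᵐ[μ] f := by
      intro s
      induction s using Finset.induction_on with
      | empty => simp [hT0]
      | @insert a s hni ih =>
          rw [Finset.sum_insert hni]
          exact invadd _ _ (hts _ _) ih
    have hxsum : x = ∑ i : Fin d, x i • E i := by
      simpa [hE, EuclideanSpace.basisFun_apply, EuclideanSpace.basisFun_repr] using
        ((EuclideanSpace.basisFun (Fin d) ℝ).sum_repr x).symm
    rw [hxsum]
    exact hsum Finset.univ
  -- ergodicity: level sets are trivial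
  have hA01 : ∀ a : ℝ, μ {ω | f ω < a} = 0 ∨ μ {ω | f ω < a} = 1 := by
    intro a
    have hAm : MeasurableSet {ω | f ω < a} := measurableSet_lt hfm measurable_const
    refine herg _ hAm fun x => ?_
    have hnull : μ {ω | ¬ f (T x ω) = f ω} = 0 := ae_iff.mp (invAll x)
    refine measure_mono_null (fun ω hω => ?_) hnull
    rcases Set.mem_symmDiff.mp hω with ⟨h1, h2⟩ | ⟨h1, h2⟩
    · intro heq
      exact h2 (show f ω < a by rw [← heq]; exact h1)
    · intro heq
      exact h2 (show f (T x ω) < a by rw [heq]; exact h1)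
  set S : Set ℝ := {a | μ {ω | f ω < a} = 1} with hS
  have hmono : ∀ {a b : ℝ}, a ≤ b → μ {ω | f ω < a} ≤ μ {ω | f ω < b} :=
    fun hab => measure_mono fun ω h => lt_of_lt_of_le h hab
  have hSne : S.Nonempty := by
    by_contra h
    have h0 : ∀ n : ℕ, μ {ω | f ω < (n:ℝ)} = 0 := by
      intro n
      rcases hA01 n with h1 | h1
      · exact h1
      · exact (h ⟨n, h1⟩).elim
    have huniv : (Set.univ : Set Ω) = ⋃ n : ℕ, {ω | f ω < (n:ℝ)} := by
      ext ω
      simp only [Set.mem_univ, true_iff, Set.mem_iUnion, Set.mem_setOf_eq]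
      exact exists_nat_gt (f ω)
    have h2 : μ Set.univ = 0 := by rw [huniv]; exact measure_iUnion_null h0
    rw [measure_univ] at h2
    exact one_ne_zero h2
  have hSbdd : BddBelow S := by
    obtain ⟨n, hn⟩ : ∃ n : ℕ, μ {ω | f ω < -(n:ℝ)} = 0 := by
      by_contra h
      push_neg at h
      have h1 : ∀ n : ℕ, μ {ω | f ω < -(n:ℝ)} = 1 := fun n => (hA01 _).resolve_left (h n)
      have hcap : (Set.univ : Set Ω) = ⋃ n : ℕ, {ω | f ω < -(n:ℝ)}ᶜ := by
        ext ω
        simp only [Set.mem_univ, true_iff, Set.mem_iUnion, Set.mem_compl_iff,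
          Set.mem_setOf_eq, not_lt]
        obtain ⟨n, hn⟩ := exists_nat_gt (-f ω)
        exact ⟨n, by linarith⟩
      have hz : ∀ n : ℕ, μ {ω | f ω < -(n:ℝ)}ᶜ = 0 := by
        intro n
        rw [prob_compl_eq_zero_iff (measurableSet_lt hfm measurable_const)]
        exact h1 n
      have h2 : μ Set.univ = 0 := by rw [hcap]; exact measure_iUnion_null hz
      rw [measure_univ] at h2
      exact one_ne_zero h2
    refine ⟨-(n:ℝ), fun b hb => ?_⟩
    by_contra hlt
    push_neg at hlt
    have h2 : μ {ω | f ω < b} ≤ μ {ω | f ω < -(n:ℝ)} := hmono hlt.le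
    rw [hb, hn] at h2
    simp at h2
  set c := sInf S with hc
  refine ⟨c, hfu.trans ?_⟩
  have hlow : μ {ω | f ω < c} = 0 := by
    have hcover : {ω | f ω < c} ⊆ ⋃ n : ℕ, {ω | f ω < c - 1/(n+1)} := by
      intro ω hω
      have hω' : f ω < c := hω
      obtain ⟨n, hn⟩ := exists_nat_one_div_lt (K := ℝ) (sub_pos.mpr hω')
      exact Set.mem_iUnion.mpr ⟨n, by simp only [Set.mem_setOf_eq]; linarith⟩
    refine measure_mono_null hcover (measure_iUnion_null fun n => ?_)
    rcases hA01 (c - 1/(n+1)) with h | h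
    · exact h
    · exfalso
      have h2 : c ≤ c - 1/(n+1) := csInf_le hSbdd h
      have hpos : 0 < 1/((n:ℝ)+1) := by positivity
      linarith
  have hhigh : μ {ω | c < f ω} = 0 := by
    have hcover : {ω | c < f ω} ⊆ ⋃ n : ℕ, {ω | f ω < c + 1/(n+1)}ᶜ := by
      intro ω hω
      have hω' : c < f ω := hω
      obtain ⟨n, hn⟩ := exists_nat_one_div_lt (K := ℝ) (sub_pos.mpr hω')
      refine Set.mem_iUnion.mpr ⟨n, ?_⟩
      simp only [Set.mem_compl_iff, Set.mem_setOf_eq, not_lt]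
      linarith
    refine measure_mono_null hcover (measure_iUnion_null fun n => ?_)
    rw [prob_compl_eq_zero_iff (measurableSet_lt hfm measurable_const)]
    have hcc : c < c + 1/(n+1) := by
      have hpos : 0 < 1/((n:ℝ)+1) := by positivity
      linarith
    obtain ⟨b, hbS, hblt⟩ := (csInf_lt_iff hSbdd hSne).mp hcc
    have h2 := hmono hblt.le
    rw [hbS] at h2
    exact le_antisymm prob_le_one h2
  have hne : μ {ω | ¬ f ω = c} = 0 := by
    have hsub : {ω | ¬ f ω = c} ⊆ {ω | f ω < c} ∪ {ω | c < f ω} :=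
      fun ω hω => (lt_or_gt_of_ne hω).imp id id
    exact measure_mono_null hsub (measure_union_null hlow hhigh)
  exact ae_iff.mpr hne
end
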